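/- Let f : ℝⁿ → ℝ be convex and differentiable with L-Lipschitz gradient. Consider the accelerated gradient method: y₀ = x₀, θ₀ = 1, x_{k+1} = y_k - (1/L)∇f(y_k), θ_{k+1} ∈ (0,1) with θ_{k+1}² = θ_k²(1 - θ_{k+1}), and y_{k+1} = x_{k+1} + (θ_{k+1}(1 - θ_k)/θ_k)(x_{k+1} - x_k). Then for all k ≥ 1 and all x ∈ ℝⁿ: f(x_k) ≤ f(x) + (L θ_{k-1}²/2)‖x₀ - x‖². -/

import Mathlib

open scoped RealInnerProductSpace

/-!
Write `v_k` for the point with `y_k = (1 - θ_k) x_k + θ_k v_k` (so `v_0 = x_0`); the recursion for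
`y` makes also `x_{k+1} = (1 - θ_k) x_k + θ_k v_{k+1}`. A gradient step of length `1/L` from `p`
satisfies `f (p - ∇f(p)/L) ≤ f w + L/2 (‖p - w‖² - ‖p - ∇f(p)/L - w‖²)` for every `w` (descent lemma
plus the supporting hyperplane of `f` at `p`). Taking `p = y_k` and `w = (1 - θ_k) x_k + θ_k u`, and
using convexity of `f` at `w`, gives
`f x_{k+1} - f u ≤ (1 - θ_k) (f x_k - f u) + θ_k² L/2 (‖v_k - u‖² - ‖v_{k+1} - u‖²)`.
As `(1 - θ_{k+1}) / θ_{k+1}² = 1 / θ_k²`, the quantity `(f x_{k+1} - f u) / θ_k² + L/2 ‖v_{k+1} - u‖²`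
is nonincreasing in `k`, and at `k = 0` it is at most `L/2 ‖x_0 - u‖²`.
-/

open Set AffineMap

section Gradient

variable {E : Type*} [NormedAddCommGroup E] [InnerProductSpace ℝ E] [CompleteSpace E]
  {f : E → ℝ} {f' : E → E} {L : ℝ}

theorem HasGradientAt.hasDerivAt_comp_lineMap {g p q : E} {t : ℝ}
    (hf : HasGradientAt f g (lineMap p q t)) :
    HasDerivAt (fun s : ℝ => f (lineMap p q s)) ⟪g, q - p⟫ t := by
  have := hf.hasFDerivAt.comp_hasDerivAt t (hasDerivAt_lineMap (a := p) (b := q) (x := t))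
  simp only [InnerProductSpace.toDual_apply_apply] at this
  exact this

theorem ConvexOn.add_inner_le_of_hasGradientAt (hf : ConvexOn ℝ univ f) {g p : E}
    (hg : HasGradientAt f g p) (u : E) : f p + ⟪g, u - p⟫ ≤ f u := by
  have hline : ConvexOn ℝ univ (f ∘ (lineMap p u : ℝ →ᵃ[ℝ] E)) := by
    simpa using hf.comp_affineMap (lineMap p u : ℝ →ᵃ[ℝ] E)
  have hd : HasDerivAt (f ∘ (lineMap p u : ℝ →ᵃ[ℝ] E)) ⟪g, u - p⟫ 0 :=
    HasGradientAt.hasDerivAt_comp_lineMap (by simpa using hg)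
  have := hline.le_slope_of_hasDerivAt (mem_univ 0) (mem_univ 1) one_pos hd
  simp only [slope_def_field, Function.comp_apply, lineMap_apply_one, lineMap_apply_zero] at this
  linarith

theorem le_add_inner_add_sq_of_lipschitz_gradient (hdiff : ∀ x, HasGradientAt f (f' x) x)
    (hlip : ∀ x y, ‖f' x - f' y‖ ≤ L * ‖x - y‖) (p z : E) :
    f z ≤ f p + ⟪f' p, z - p⟫ + L / 2 * ‖z - p‖ ^ 2 := by
  set w := z - p
  have hφ (t : ℝ) : HasDerivAt (fun s => f (lineMap p z s)) ⟪f' (lineMap p z t), w⟫ t :=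
    (hdiff _).hasDerivAt_comp_lineMap
  have hB (t : ℝ) : HasDerivAt (fun s => f p + s * ⟪f' p, w⟫ + L / 2 * s ^ 2 * ‖w‖ ^ 2)
      (⟪f' p, w⟫ + L * t * ‖w‖ ^ 2) t := by
    have h := (((hasDerivAt_id' t).mul_const ⟪f' p, w⟫).const_add (f p)).add
      (((hasDerivAt_pow 2 t).const_mul (L / 2)).mul_const (‖w‖ ^ 2))
    exact h.congr_deriv (by ring)
  have hbound : ∀ t ∈ Ico (0 : ℝ) 1, ⟪f' (lineMap p z t), w⟫ ≤ ⟪f' p, w⟫ + L * t * ‖w‖ ^ 2 := by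
    intro t ht
    calc ⟪f' (lineMap p z t), w⟫ = ⟪f' p, w⟫ + ⟪f' (lineMap p z t) - f' p, w⟫ := by
          rw [inner_sub_left]; ring
      _ ≤ ⟪f' p, w⟫ + L * ‖lineMap p z t - p‖ * ‖w‖ := by
          gcongr
          exact (real_inner_le_norm _ _).trans (by gcongr; exact hlip _ _)
      _ = ⟪f' p, w⟫ + L * t * ‖w‖ ^ 2 := by
          rw [lineMap_apply_module', add_sub_cancel_right, norm_smul, Real.norm_of_nonneg ht.1]
          ring
  have := image_le_of_deriv_right_le_deriv_boundary
    (fun t _ => (hφ t).continuousAt.continuousWithinAt) (fun t _ => (hφ t).hasDerivWithinAt)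
    (by simp) (fun t _ => (hB t).continuousAt.continuousWithinAt)
    (fun t _ => (hB t).hasDerivWithinAt) hbound (right_mem_Icc.2 zero_le_one)
  simpa using this

theorem le_add_sq_sub_sq_of_gradient_step (hL : 0 < L) (hf : ConvexOn ℝ univ f)
    (hdiff : ∀ x, HasGradientAt f (f' x) x) (hlip : ∀ x y, ‖f' x - f' y‖ ≤ L * ‖x - y‖)
    (p u : E) :
    f (p - (1 / L) • f' p) ≤ f u + L / 2 * (‖p - u‖ ^ 2 - ‖p - (1 / L) • f' p - u‖ ^ 2) := by
  set g := f' p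
  have hdesc := le_add_inner_add_sq_of_lipschitz_gradient hdiff hlip p (p - (1 / L) • g)
  have hsupp := hf.add_inner_le_of_hasGradientAt (hdiff p) u
  have hdesc_eq : ⟪g, p - (1 / L) • g - p⟫ + L / 2 * ‖p - (1 / L) • g - p‖ ^ 2
      = -(1 / (2 * L)) * ‖g‖ ^ 2 := by
    rw [sub_sub_cancel_left, inner_neg_right, norm_neg, real_inner_smul_right,
      real_inner_self_eq_norm_sq, norm_smul, Real.norm_of_nonneg (by positivity)]
    field_simp
    ring
  have hdist_eq : L / 2 * (‖p - u‖ ^ 2 - ‖p - (1 / L) • g - u‖ ^ 2)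
      = ⟪g, p - u⟫ - 1 / (2 * L) * ‖g‖ ^ 2 := by
    rw [sub_right_comm, norm_sub_sq_real (p - u), real_inner_smul_right, norm_smul,
      Real.norm_of_nonneg (by positivity), real_inner_comm]
    field_simp
    ring
  have hsupp_eq : ⟪g, u - p⟫ = -⟪g, p - u⟫ := by rw [← inner_neg_right, neg_sub]
  linarith

theorem accelerated_step_le {θ : ℝ} (hL : 0 < L)
    (hf : ConvexOn ℝ univ f) (hdiff : ∀ x, HasGradientAt f (f' x) x)
    (hlip : ∀ x y, ‖f' x - f' y‖ ≤ L * ‖x - y‖) (hθ₀ : 0 ≤ θ) (hθ₁ : θ ≤ 1)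
    {x v y x' v' u : E} (hy : y = (1 - θ) • x + θ • v) (hx' : x' = y - (1 / L) • f' y)
    (hv' : x' = (1 - θ) • x + θ • v') :
    f x' - f u ≤ (1 - θ) * (f x - f u) + θ ^ 2 * (L / 2 * ‖v - u‖ ^ 2 - L / 2 * ‖v' - u‖ ^ 2) := by
  set w := (1 - θ) • x + θ • u
  have hstep := le_add_sq_sub_sq_of_gradient_step hL hf hdiff hlip y w
  rw [← hx'] at hstep
  have hyw : y - w = θ • (v - u) := by rw [hy]; module
  have hxw : x' - w = θ • (v' - u) := by rw [hv']; module
  rw [hyw, hxw, norm_smul, norm_smul, mul_pow, mul_pow, Real.norm_eq_abs, sq_abs] at hstep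
  have hw : f w ≤ (1 - θ) * f x + θ * f u :=
    hf.2 (mem_univ x) (mem_univ u) (by linarith) hθ₀ (by ring)
  linarith

end Gradient

theorem le_sq_mul_of_estimate_recurrence (a d θ : ℕ → ℝ) (hθ0 : θ 0 = 1)
    (hθpos : ∀ n, 0 < θ n) (hθrec : ∀ n, θ (n + 1) ^ 2 = θ n ^ 2 * (1 - θ (n + 1)))
    (hd : ∀ n, 0 ≤ d n) (hstep : ∀ n, a (n + 1) ≤ (1 - θ n) * a n + θ n ^ 2 * (d n - d (n + 1)))
    (n : ℕ) : a (n + 1) ≤ θ n ^ 2 * d 0 := by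
  have lyapunov : ∀ m, a (m + 1) / θ m ^ 2 + d (m + 1) ≤ d 0 := by
    intro m
    induction m with
    | zero =>
      have := hstep 0
      simp only [hθ0, zero_add, sub_self, zero_mul, one_pow, one_mul, div_one] at this ⊢
      linarith
    | succ m ih =>
      have hpos := pow_pos (hθpos (m + 1)) 2
      have hcoef : 1 - θ (m + 1) = θ (m + 1) ^ 2 / θ m ^ 2 := by
        have := (hθpos m).ne'
        rw [hθrec m]
        field_simp
      have hdiv : a (m + 2) / θ (m + 1) ^ 2 ≤ a (m + 1) / θ m ^ 2 + (d (m + 1) - d (m + 2)) := by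
        rw [div_le_iff₀ hpos]
        calc a (m + 2) ≤ (1 - θ (m + 1)) * a (m + 1) + θ (m + 1) ^ 2 * (d (m + 1) - d (m + 2)) :=
              hstep (m + 1)
          _ = _ := by rw [hcoef]; ring
      linarith
  have hpos := pow_pos (hθpos n) 2
  have hn := lyapunov n
  rw [div_add' _ _ _ hpos.ne', div_le_iff₀ hpos] at hn
  nlinarith [hd (n + 1)]

section Extrapolate

variable {E : Type*} [AddCommGroup E] [Module ℝ E]

/-- The point `v_m` with `y_m = (1 - θ_m) x_m + θ_m v_m`. -/
noncomputable def extrapolate (x : ℕ → E) (θ : ℕ → ℝ) : ℕ → E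
  | 0 => x 0
  | m + 1 => x m + (θ m)⁻¹ • (x (m + 1) - x m)

theorem succ_eq_combo_extrapolate {x : ℕ → E} {θ : ℕ → ℝ} {m : ℕ} (hθ : θ m ≠ 0) :
    x (m + 1) = (1 - θ m) • x m + θ m • extrapolate x θ (m + 1) := by
  simp only [extrapolate, smul_add, smul_smul, mul_inv_cancel₀ hθ, one_smul]
  module

theorem eq_combo_extrapolate {x y : ℕ → E} {θ : ℕ → ℝ} (hy0 : y 0 = x 0) (hθ0 : θ 0 = 1)
    (hθ : ∀ m, θ m ≠ 0)
    (hyrec : ∀ k, y (k + 1) = x (k + 1) + (θ (k + 1) * (1 - θ k) / θ k) • (x (k + 1) - x k))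
    (m : ℕ) : y m = (1 - θ m) • x m + θ m • extrapolate x θ m := by
  cases m with
  | zero => simp [extrapolate, hθ0, hy0]
  | succ m =>
    rw [hyrec m, extrapolate]
    have := hθ m
    match_scalars <;> field_simp <;> ring

end Extrapolate

theorem accelerated_gradient_bound
    {E : Type*} [NormedAddCommGroup E] [InnerProductSpace ℝ E] [CompleteSpace E]
    (f : E → ℝ) (f' : E → E) (L : ℝ) (hL : 0 < L)
    (hconv : ConvexOn ℝ Set.univ f)
    (hdiff : ∀ x : E, HasGradientAt f (f' x) x)
    (hlip : ∀ x y : E, ‖f' x - f' y‖ ≤ L * ‖x - y‖)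
    (x y : ℕ → E) (θ : ℕ → ℝ)
    (hy0 : y 0 = x 0) (hθ0 : θ 0 = 1)
    (hx : ∀ k, x (k + 1) = y k - (1 / L) • f' (y k))
    (hθmem : ∀ k, θ (k + 1) ∈ Set.Ioo (0 : ℝ) 1)
    (hθrec : ∀ k, θ (k + 1) ^ 2 = θ k ^ 2 * (1 - θ (k + 1)))
    (hyrec : ∀ k, y (k + 1)
      = x (k + 1) + (θ (k + 1) * (1 - θ k) / θ k) • (x (k + 1) - x k)) :
    ∀ k : ℕ, 1 ≤ k → ∀ u : E,
      f (x k) ≤ f u + L * θ (k - 1) ^ 2 / 2 * ‖x 0 - u‖ ^ 2 := by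
  intro k hk u
  obtain ⟨n, rfl⟩ := Nat.exists_eq_add_of_le' hk
  have hθpos : ∀ m, 0 < θ m
    | 0 => hθ0 ▸ one_pos
    | m + 1 => (hθmem m).1
  have hθle : ∀ m, θ m ≤ 1
    | 0 => hθ0.le
    | m + 1 => (hθmem m).2.le
  have hstep (m : ℕ) := accelerated_step_le (u := u) hL hconv hdiff hlip (hθpos m).le (hθle m)
    (eq_combo_extrapolate hy0 hθ0 (fun m => (hθpos m).ne') hyrec m) (hx m)
    (succ_eq_combo_extrapolate (hθpos m).ne')
  have hbound := le_sq_mul_of_estimate_recurrence (fun m => f (x m) - f u)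
    (fun m => L / 2 * ‖extrapolate x θ m - u‖ ^ 2) θ hθ0 hθpos hθrec (fun m => by positivity) hstep n
  rw [extrapolate] at hbound
  rw [Nat.add_sub_cancel]
  linarith
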